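/- Let (Ω, 𝓕, P) be a probability space, (f_n)_{n∈ℕ} a sequence of nonnegative a.e.-finite measurable functions converging in probability to a nonnegative a.e.-finite measurable function f, and let Q be a probability measure equivalent to P with sup_{n∈ℕ} E_Q[f_n] < ∞ and lim_{n→∞} E_Q[|f_n − f|] = 0. Let C' = { Σ_{n∈ℕ} α_n f_n + (1 − Σ_{n∈ℕ} α_n) f : α_n ≥ 0 for all n, Σ_{n∈ℕ} α_n ≤ 1 }. If (g_k)_{k∈ℕ} is a C'-valued sequence converging in probability (with respect to P) to a measurable function g, then g ∈ C' (up to a.e. equality) and lim_{k→∞} E_Q[|g_k − g|] = 0. Hence the topology of convergence in probability and the L¹(Q)-topology coincide on C'. -/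

import Mathlib

/-!
Write `F n = f n - flim`, so that `C'` consists of the functions `flim + Σ αₙ Fₙ` with
sub-probability weights `α`, and `E_Q |Fₙ| → 0`. By compactness of `[0,1]^ℕ`, weights `αᵏ` have a
pointwise convergent subsequence `αᵏ → β`. Since
`E_Q |Σ (αᵏₙ - βₙ) Fₙ| ≤ Σ |αᵏₙ - βₙ| E_Q |Fₙ|`, where the weights `αᵏ - β` have `ℓ¹`-norm at most
`2` and tend to `0` coordinatewise while `E_Q |Fₙ| → 0`, the subsequence converges in `L¹(Q)` to
`flim + Σ βₙ Fₙ`. Limits in `Q`-probability are unique and `Q ≪ P`, so this limit is `glim`.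
Every subsequence of `(g k)` thus has a further subsequence converging to `glim` in `L¹(Q)`.
-/

open MeasureTheory Filter Set

/-- `g` is a countable convex combination `Σₙ αₙ fₙ + (1 - Σₙ αₙ) flim`, the series
being understood as a pointwise a.e. limit. -/
def MemCountableConvex {Ω : Type*} [MeasurableSpace Ω] (μ : Measure Ω)
    (f : ℕ → Ω → ℝ) (flim : Ω → ℝ) (g : Ω → ℝ) : Prop :=
  ∃ α : ℕ → ℝ, (∀ n, 0 ≤ α n) ∧ Summable α ∧ (∑' n, α n) ≤ 1 ∧
    ∀ᵐ ω ∂μ, HasSum (fun n => α n * f n ω) (g ω - (1 - ∑' n, α n) * flim ω)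

open Topology
open scoped ENNReal

structure IsSubProbWeights (α : ℕ → ℝ) : Prop where
  nonneg : ∀ n, 0 ≤ α n
  summable : Summable α
  tsum_le_one : ∑' n, α n ≤ 1

namespace IsSubProbWeights

variable {α : ℕ → ℝ}

theorem le_one (hα : IsSubProbWeights α) (n : ℕ) : α n ≤ 1 :=
  (hα.summable.le_tsum n fun m _ => hα.nonneg m).trans hα.tsum_le_one

theorem tsum_enorm_le_one (hα : IsSubProbWeights α) : ∑' n, ‖α n‖ₑ ≤ 1 := by
  simp_rw [Real.enorm_eq_ofReal (hα.nonneg _)]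
  rw [← ENNReal.ofReal_tsum_of_nonneg hα.nonneg hα.summable]
  exact ENNReal.ofReal_le_one.2 hα.tsum_le_one

theorem of_tendsto {ι : Type*} {L : Filter ι} [L.NeBot] {a : ι → ℕ → ℝ}
    (ha : ∀ i, IsSubProbWeights (a i)) (haα : Tendsto a L (𝓝 α)) : IsSubProbWeights α := by
  have hcoord := tendsto_pi_nhds.1 haα
  have hsum : ∀ s : Finset ℕ, ∑ n ∈ s, α n ≤ 1 := fun s =>
    le_of_tendsto (tendsto_finsetSum s fun n _ => hcoord n) <| Eventually.of_forall fun i =>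
      ((ha i).summable.sum_le_tsum s fun m _ => (ha i).nonneg m).trans (ha i).tsum_le_one
  have hnonneg : ∀ n, 0 ≤ α n := fun n =>
    ge_of_tendsto (hcoord n) (Eventually.of_forall fun i => (ha i).nonneg n)
  have hsummable : Summable α := summable_of_sum_le hnonneg hsum
  exact ⟨hnonneg, hsummable, hsummable.tsum_le_of_sum_le hsum⟩

theorem exists_subseq_tendsto {a : ℕ → ℕ → ℝ} (ha : ∀ k, IsSubProbWeights (a k)) :
    ∃ β, IsSubProbWeights β ∧ ∃ φ : ℕ → ℕ, StrictMono φ ∧ Tendsto (a ∘ φ) atTop (𝓝 β) := by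
  have hcompact : IsCompact (univ.pi fun _ : ℕ => Icc (0 : ℝ) 1) :=
    isCompact_univ_pi fun _ => isCompact_Icc
  obtain ⟨β, -, φ, hφ, hβ⟩ := hcompact.tendsto_subseq
    fun k => mem_univ_pi.2 fun n => ⟨(ha k).nonneg n, (ha k).le_one n⟩
  exact ⟨β, of_tendsto (fun k => ha (φ k)) hβ, φ, hφ, hβ⟩

end IsSubProbWeights

theorem ENNReal.tendsto_tsum_mul_of_tendsto_zero {ι : Type*} {L : Filter ι}
    {d : ι → ℕ → ℝ≥0∞} {c : ℕ → ℝ≥0∞} {B : ℝ≥0∞} (hB : B ≠ ⊤) (hdB : ∀ i, ∑' n, d i n ≤ B)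
    (hd : ∀ n, Tendsto (fun i => d i n) L (𝓝 0)) (hc : ∀ n, c n ≠ ⊤)
    (hc0 : Tendsto c atTop (𝓝 0)) :
    Tendsto (fun i => ∑' n, d i n * c n) L (𝓝 0) := by
  rw [ENNReal.tendsto_nhds_zero]
  intro ε hε
  obtain ⟨δ, hδ, hδB⟩ := ENNReal.exists_pos_mul_lt hB (ENNReal.half_pos hε.ne').ne'
  obtain ⟨N, hN⟩ := eventually_atTop.1 (hc0.eventually_le_const hδ)
  have hhead : Tendsto (fun i => ∑ n ∈ Finset.range N, d i n * c n) L (𝓝 0) := by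
    simpa using tendsto_finsetSum (Finset.range N) fun n _ =>
      ENNReal.Tendsto.mul_const (hd n) (Or.inr (hc n))
  filter_upwards [hhead.eventually_le_const (ENNReal.half_pos hε.ne')] with i hi
  have htail : ∑' n, d i (n + N) * c (n + N) ≤ δ * B :=
    calc ∑' n, d i (n + N) * c (n + N) ≤ ∑' n, d i (n + N) * δ :=
          ENNReal.tsum_le_tsum fun n => mul_le_mul_right (hN _ (Nat.le_add_left N n)) _
      _ = (∑' n, d i (n + N)) * δ := ENNReal.tsum_mul_right
      _ ≤ B * δ := mul_le_mul_left
          ((ENNReal.tsum_comp_le_tsum_of_injective (add_left_injective N) _).trans (hdB i)) _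
      _ = δ * B := mul_comm _ _
  calc ∑' n, d i n * c n
      = ∑ n ∈ Finset.range N, d i n * c n + ∑' n, d i (n + N) * c (n + N) :=
        ENNReal.summable.sum_add_tsum_nat_add'.symm
    _ ≤ ε / 2 + ε / 2 := add_le_add hi (htail.trans hδB.le)
    _ = ε := ENNReal.add_halves ε

theorem MeasureTheory.Measure.AbsolutelyContinuous.tendsto_measure_zero {Ω ι : Type*}
    [MeasurableSpace Ω] {P Q : Measure Ω} [IsFiniteMeasure Q] [SigmaFinite P] (hQP : Q ≪ P)
    {l : Filter ι} {s : ι → Set Ω} (h : Tendsto (fun i => P (s i)) l (𝓝 0)) :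
    Tendsto (fun i => Q (s i)) l (𝓝 0) := by
  simpa only [Measure.setLIntegral_rnDeriv hQP] using
    tendsto_setLIntegral_zero (Measure.lintegral_rnDeriv_lt_top Q P).ne h

theorem MeasureTheory.TendstoInMeasure.of_absolutelyContinuous {Ω ι E : Type*}
    [MeasurableSpace Ω] [EDist E] {P Q : Measure Ω} [IsFiniteMeasure Q] [SigmaFinite P]
    (hQP : Q ≪ P) {l : Filter ι} {f : ι → Ω → E} {g : Ω → E}
    (h : TendstoInMeasure P f l g) : TendstoInMeasure Q f l g :=
  fun ε hε => hQP.tendsto_measure_zero (h ε hε)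

section Series

variable {Ω E : Type*} [MeasurableSpace Ω] {μ : Measure Ω} [NormedAddCommGroup E]
  {F : ℕ → Ω → E}

theorem aestronglyMeasurable_of_ae_hasSum {s : Ω → E} (hF : ∀ n, AEStronglyMeasurable (F n) μ)
    (h : ∀ᵐ ω ∂μ, HasSum (fun n => F n ω) (s ω)) : AEStronglyMeasurable s μ :=
  aestronglyMeasurable_of_tendsto_ae atTop
    (fun N => Finset.aestronglyMeasurable_fun_sum (Finset.range N) fun n _ => hF n)
    (h.mono fun _ hω => hω.tendsto_sum_nat)

theorem lintegral_enorm_le_tsum_of_ae_hasSum {s : Ω → E}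
    (hF : ∀ n, AEStronglyMeasurable (F n) μ) (h : ∀ᵐ ω ∂μ, HasSum (fun n => F n ω) (s ω)) :
    ∫⁻ ω, ‖s ω‖ₑ ∂μ ≤ ∑' n, ∫⁻ ω, ‖F n ω‖ₑ ∂μ :=
  calc ∫⁻ ω, ‖s ω‖ₑ ∂μ ≤ ∫⁻ ω, ∑' n, ‖F n ω‖ₑ ∂μ :=
        lintegral_mono_ae <| h.mono fun _ hω => hω.tsum_eq ▸ enorm_tsum_le_tsum_enorm
    _ = ∑' n, ∫⁻ ω, ‖F n ω‖ₑ ∂μ := lintegral_tsum fun n => (hF n).enorm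

theorem ae_summable_of_tsum_lintegral_enorm_ne_top [CompleteSpace E]
    (hF : ∀ n, AEStronglyMeasurable (F n) μ) (h : ∑' n, ∫⁻ ω, ‖F n ω‖ₑ ∂μ ≠ ⊤) :
    ∀ᵐ ω ∂μ, Summable fun n => F n ω := by
  rw [← lintegral_tsum fun n => (hF n).enorm] at h
  filter_upwards [ae_lt_top' (AEMeasurable.tsum fun n => (hF n).enorm) h] with ω hω
  exact Summable.of_nnnorm (ENNReal.tsum_coe_ne_top_iff_summable.1 hω.ne)

theorem lintegral_enorm_sub_le {a b : Ω → E} (ha : AEStronglyMeasurable a μ) :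
    ∫⁻ ω, ‖a ω - b ω‖ₑ ∂μ ≤ ∫⁻ ω, ‖a ω‖ₑ ∂μ + ∫⁻ ω, ‖b ω‖ₑ ∂μ :=
  (lintegral_mono fun _ => enorm_sub_le).trans (lintegral_add_left' ha.enorm _).le

end Series

section Weights

variable {Ω : Type*} [MeasurableSpace Ω] {μ : Measure Ω} {F : ℕ → Ω → ℝ} {K : ℝ≥0∞}

theorem lintegral_enorm_const_mul (c : ℝ) {f : Ω → ℝ} (hf : AEStronglyMeasurable f μ) :
    ∫⁻ ω, ‖c * f ω‖ₑ ∂μ = ‖c‖ₑ * ∫⁻ ω, ‖f ω‖ₑ ∂μ := by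
  simp_rw [enorm_mul]
  exact lintegral_const_mul'' _ hf.enorm

theorem lintegral_enorm_le_tsum_mul_of_ae_hasSum (hF : ∀ n, AEStronglyMeasurable (F n) μ)
    {γ : ℕ → ℝ} {s : Ω → ℝ} (h : ∀ᵐ ω ∂μ, HasSum (fun n => γ n * F n ω) (s ω)) :
    ∫⁻ ω, ‖s ω‖ₑ ∂μ ≤ ∑' n, ‖γ n‖ₑ * ∫⁻ ω, ‖F n ω‖ₑ ∂μ := by
  simpa only [lintegral_enorm_const_mul _ (hF _)] using
    lintegral_enorm_le_tsum_of_ae_hasSum (fun n => (hF n).const_mul (γ n)) h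

theorem IsSubProbWeights.ae_summable_mul {β : ℕ → ℝ} (hβ : IsSubProbWeights β)
    (hF : ∀ n, AEStronglyMeasurable (F n) μ) (hK : K ≠ ⊤)
    (hFK : ∀ n, ∫⁻ ω, ‖F n ω‖ₑ ∂μ ≤ K) :
    ∀ᵐ ω ∂μ, Summable fun n => β n * F n ω := by
  refine ae_summable_of_tsum_lintegral_enorm_ne_top (fun n => (hF n).const_mul (β n)) ?_
  simp_rw [lintegral_enorm_const_mul _ (hF _)]
  refine ne_top_of_le_ne_top hK ?_
  calc ∑' n, ‖β n‖ₑ * ∫⁻ ω, ‖F n ω‖ₑ ∂μ ≤ ∑' n, ‖β n‖ₑ * K :=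
        ENNReal.tsum_le_tsum fun n => mul_le_mul_right (hFK n) _
    _ = (∑' n, ‖β n‖ₑ) * K := ENNReal.tsum_mul_right
    _ ≤ 1 * K := mul_le_mul_left hβ.tsum_enorm_le_one _
    _ = K := one_mul K

theorem tendsto_lintegral_enorm_sub_of_tendsto_weights {ι : Type*} {L : Filter ι}
    (hF : ∀ n, AEStronglyMeasurable (F n) μ) (hK : K ≠ ⊤)
    (hFK : ∀ n, ∫⁻ ω, ‖F n ω‖ₑ ∂μ ≤ K)
    (hF0 : Tendsto (fun n => ∫⁻ ω, ‖F n ω‖ₑ ∂μ) atTop (𝓝 0))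
    {α : ι → ℕ → ℝ} {β : ℕ → ℝ} (hα : ∀ i, IsSubProbWeights (α i)) (hβ : IsSubProbWeights β)
    (hαβ : Tendsto α L (𝓝 β)) {u : ι → Ω → ℝ} {w : Ω → ℝ}
    (hu : ∀ i, ∀ᵐ ω ∂μ, HasSum (fun n => α i n * F n ω) (u i ω))
    (hw : ∀ᵐ ω ∂μ, HasSum (fun n => β n * F n ω) (w ω)) :
    Tendsto (fun i => ∫⁻ ω, ‖u i ω - w ω‖ₑ ∂μ) L (𝓝 0) := by
  have hbound : ∀ i, ∫⁻ ω, ‖u i ω - w ω‖ₑ ∂μ ≤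
      ∑' n, ‖α i n - β n‖ₑ * ∫⁻ ω, ‖F n ω‖ₑ ∂μ := fun i =>
    lintegral_enorm_le_tsum_mul_of_ae_hasSum hF <| by
      filter_upwards [hu i, hw] with ω hui hw
      simpa only [sub_mul] using hui.sub hw
  have hdist : ∀ i, ∑' n, ‖α i n - β n‖ₑ ≤ 2 := fun i =>
    calc ∑' n, ‖α i n - β n‖ₑ ≤ ∑' n, (‖α i n‖ₑ + ‖β n‖ₑ) :=
        ENNReal.tsum_le_tsum fun n => enorm_sub_le
      _ = ∑' n, ‖α i n‖ₑ + ∑' n, ‖β n‖ₑ := ENNReal.tsum_add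
      _ ≤ 1 + 1 := add_le_add (hα i).tsum_enorm_le_one hβ.tsum_enorm_le_one
      _ = 2 := one_add_one_eq_two
  have hcoord : ∀ n, Tendsto (fun i => ‖α i n - β n‖ₑ) L (𝓝 0) := fun n => by
    simpa using ((tendsto_pi_nhds.1 hαβ n).sub_const (β n)).enorm
  refine tendsto_of_tendsto_of_tendsto_of_le_of_le tendsto_const_nhds ?_ (fun _ => zero_le) hbound
  exact ENNReal.tendsto_tsum_mul_of_tendsto_zero ENNReal.ofNat_ne_top hdist hcoord
    (fun n => ne_top_of_le_ne_top hK (hFK n)) hF0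

theorem exists_weights_subseq_tendsto_lintegral (hF : ∀ n, AEStronglyMeasurable (F n) μ)
    (hK : K ≠ ⊤) (hFK : ∀ n, ∫⁻ ω, ‖F n ω‖ₑ ∂μ ≤ K)
    (hF0 : Tendsto (fun n => ∫⁻ ω, ‖F n ω‖ₑ ∂μ) atTop (𝓝 0))
    {α : ℕ → ℕ → ℝ} (hα : ∀ k, IsSubProbWeights (α k)) {u : ℕ → Ω → ℝ} {v : Ω → ℝ}
    (hu : ∀ k, ∀ᵐ ω ∂μ, HasSum (fun n => α k n * F n ω) (u k ω))
    (huv : TendstoInMeasure μ u atTop v) :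
    ∃ β, IsSubProbWeights β ∧ (∀ᵐ ω ∂μ, HasSum (fun n => β n * F n ω) (v ω)) ∧
      ∃ φ : ℕ → ℕ, StrictMono φ ∧ Tendsto (fun k => ∫⁻ ω, ‖u (φ k) ω - v ω‖ₑ ∂μ) atTop (𝓝 0) := by
  obtain ⟨β, hβ, φ, hφ, hαβ⟩ := IsSubProbWeights.exists_subseq_tendsto hα
  set w : Ω → ℝ := fun ω => ∑' n, β n * F n ω
  have hw : ∀ᵐ ω ∂μ, HasSum (fun n => β n * F n ω) (w ω) :=
    (hβ.ae_summable_mul hF hK hFK).mono fun _ h => h.hasSum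
  have hL1 : Tendsto (fun k => ∫⁻ ω, ‖u (φ k) ω - w ω‖ₑ ∂μ) atTop (𝓝 0) :=
    tendsto_lintegral_enorm_sub_of_tendsto_weights hF hK hFK hF0 (fun k => hα (φ k)) hβ hαβ
      (fun k => hu (φ k)) hw
  have hmeas : ∀ γ : ℕ → ℝ, ∀ s : Ω → ℝ, (∀ᵐ ω ∂μ, HasSum (fun n => γ n * F n ω) (s ω)) →
      AEStronglyMeasurable s μ := fun γ _ =>
    aestronglyMeasurable_of_ae_hasSum fun n => (hF n).const_mul (γ n)
  have huw : TendstoInMeasure μ (u ∘ φ) atTop w :=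
    tendstoInMeasure_of_tendsto_eLpNorm one_ne_zero (fun k => hmeas _ _ (hu (φ k)))
      (hmeas _ _ hw) (by
        simpa only [eLpNorm_one_eq_lintegral_enorm, Pi.sub_apply, Function.comp_apply] using hL1)
  have hwv : w =ᵐ[μ] v := tendstoInMeasure_ae_unique huw (huv.comp hφ.tendsto_atTop)
  refine ⟨β, hβ, ?_, φ, hφ, ?_⟩
  · filter_upwards [hw, hwv] with ω hω hwv
    rwa [← hwv]
  · refine hL1.congr fun k => lintegral_congr_ae ?_
    filter_upwards [hwv] with ω hwv
    rw [hwv]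

end Weights

theorem exists_lintegral_enorm_sub_le {Ω : Type*} [MeasurableSpace Ω] {μ : Measure Ω}
    {f : ℕ → Ω → ℝ} {flim : Ω → ℝ} (hf : ∀ n, AEStronglyMeasurable (f n) μ)
    (hfnn : ∀ n, 0 ≤ᵐ[μ] f n) (hsup : ⨆ n, ∫⁻ ω, ENNReal.ofReal (f n ω) ∂μ < ⊤) {n₀ : ℕ}
    (hn₀ : ∫⁻ ω, ‖f n₀ ω - flim ω‖ₑ ∂μ ≠ ⊤) :
    ∃ K ≠ ⊤, ∀ n, ∫⁻ ω, ‖f n ω - flim ω‖ₑ ∂μ ≤ K := by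
  set M := ⨆ n, ∫⁻ ω, ENNReal.ofReal (f n ω) ∂μ
  have hfM : ∀ n, ∫⁻ ω, ‖f n ω‖ₑ ∂μ ≤ M := fun n =>
    (lintegral_congr_ae ((hfnn n).mono fun _ h => Real.enorm_eq_ofReal h)).trans_le
      (le_iSup (fun m => ∫⁻ ω, ENNReal.ofReal (f m ω) ∂μ) n)
  have hflim : ∫⁻ ω, ‖flim ω‖ₑ ∂μ ≤ M + ∫⁻ ω, ‖f n₀ ω - flim ω‖ₑ ∂μ := by
    calc ∫⁻ ω, ‖flim ω‖ₑ ∂μ = ∫⁻ ω, ‖f n₀ ω - (f n₀ ω - flim ω)‖ₑ ∂μ := by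
          simp only [sub_sub_cancel]
      _ ≤ ∫⁻ ω, ‖f n₀ ω‖ₑ ∂μ + ∫⁻ ω, ‖f n₀ ω - flim ω‖ₑ ∂μ := lintegral_enorm_sub_le (hf n₀)
      _ ≤ M + ∫⁻ ω, ‖f n₀ ω - flim ω‖ₑ ∂μ := add_le_add (hfM n₀) le_rfl
  refine ⟨M + (M + ∫⁻ ω, ‖f n₀ ω - flim ω‖ₑ ∂μ), ?_, fun n => ?_⟩
  · exact ENNReal.add_ne_top.2 ⟨hsup.ne, ENNReal.add_ne_top.2 ⟨hsup.ne, hn₀⟩⟩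
  · exact (lintegral_enorm_sub_le (hf n)).trans (add_le_add (hfM n) hflim)

theorem memCountableConvex_iff {Ω : Type*} [MeasurableSpace Ω] {μ : Measure Ω}
    {f : ℕ → Ω → ℝ} {flim g : Ω → ℝ} :
    MemCountableConvex μ f flim g ↔ ∃ α, IsSubProbWeights α ∧
      ∀ᵐ ω ∂μ, HasSum (fun n => α n * (f n ω - flim ω)) (g ω - flim ω) := by
  have hcentre : ∀ α : ℕ → ℝ, Summable α → ∀ ω,
      HasSum (fun n => α n * f n ω) (g ω - (1 - ∑' n, α n) * flim ω) ↔
        HasSum (fun n => α n * (f n ω - flim ω)) (g ω - flim ω) := fun α hα ω => by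
    have hflim := hα.hasSum.mul_right (flim ω)
    simp_rw [mul_sub]
    constructor
    · intro h
      rw [show g ω - flim ω = g ω - (1 - ∑' n, α n) * flim ω - (∑' n, α n) * flim ω by ring]
      exact h.sub hflim
    · intro h
      rw [show g ω - (1 - ∑' n, α n) * flim ω = g ω - flim ω + (∑' n, α n) * flim ω by ring]
      simpa only [sub_add_cancel] using h.add hflim
  constructor
  · rintro ⟨α, hnonneg, hsummable, hle, h⟩
    exact ⟨α, ⟨hnonneg, hsummable, hle⟩, h.mono fun ω => (hcentre α hsummable ω).1⟩
  · rintro ⟨α, ⟨hnonneg, hsummable, hle⟩, h⟩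
    exact ⟨α, hnonneg, hsummable, hle, h.mono fun ω => (hcentre α hsummable ω).2⟩

theorem stmt8_general {Ω : Type*} [MeasurableSpace Ω] (P Q : Measure Ω)
    [IsProbabilityMeasure P] [IsProbabilityMeasure Q]
    (f : ℕ → Ω → ℝ) (flim : Ω → ℝ)
    (hfmeas : ∀ n, Measurable (f n)) (hfnn : ∀ n, 0 ≤ᵐ[P] f n)
    (hflimmeas : Measurable flim)
    (hPQ : P ≪ Q) (hQP : Q ≪ P)
    (hsup : (⨆ n, ∫⁻ ω, ENNReal.ofReal (f n ω) ∂Q) < ⊤)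
    (hL1 : Tendsto (fun n => ∫⁻ ω, ENNReal.ofReal |f n ω - flim ω| ∂Q) atTop (nhds 0))
    (g : ℕ → Ω → ℝ) (glim : Ω → ℝ)
    (hmem : ∀ k, MemCountableConvex P f flim (g k))
    (hconv2 : TendstoInMeasure P g atTop glim) :
    MemCountableConvex P f flim glim ∧
      Tendsto (fun k => ∫⁻ ω, ENNReal.ofReal |g k ω - glim ω| ∂Q) atTop (nhds 0) := by
  set F : ℕ → Ω → ℝ := fun n ω => f n ω - flim ω
  have hF : ∀ n, AEStronglyMeasurable (F n) Q := fun n =>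
    ((hfmeas n).sub hflimmeas).aestronglyMeasurable
  have hF0 : Tendsto (fun n => ∫⁻ ω, ‖F n ω‖ₑ ∂Q) atTop (𝓝 0) := by
    simpa only [Real.enorm_eq_ofReal_abs] using hL1
  obtain ⟨n₀, hn₀⟩ := (hF0.eventually_lt_const zero_lt_one).exists
  obtain ⟨K, hK, hFK⟩ := exists_lintegral_enorm_sub_le (fun n => (hfmeas n).aestronglyMeasurable)
    (fun n => hQP.ae_le (hfnn n)) hsup (hn₀.trans ENNReal.one_lt_top).ne
  choose α hα hu using fun k => memCountableConvex_iff.1 (hmem k)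
  have huQ : ∀ k, ∀ᵐ ω ∂Q, HasSum (fun n => α k n * F n ω) (g k ω - flim ω) := fun k =>
    hQP.ae_le (hu k)
  have hv : TendstoInMeasure Q (fun k ω => g k ω - flim ω) atTop (fun ω => glim ω - flim ω) :=
    fun ε hε => by simpa only [edist_sub_right] using hconv2.of_absolutelyContinuous hQP ε hε
  simp_rw [← Real.enorm_eq_ofReal_abs]
  constructor
  · obtain ⟨β, hβ, hβv, -⟩ := exists_weights_subseq_tendsto_lintegral hF hK hFK hF0 hα huQ hv
    exact memCountableConvex_iff.2 ⟨β, hβ, hPQ.ae_le hβv⟩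
  · refine tendsto_of_subseq_tendsto fun ns hns => ?_
    obtain ⟨-, -, -, φ, -, hφ⟩ := exists_weights_subseq_tendsto_lintegral hF hK hFK hF0
      (fun k => hα (ns k)) (fun k => huQ (ns k)) (hv.comp hns)
    exact ⟨φ, by simpa only [sub_sub_sub_cancel_right] using hφ⟩

theorem stmt8 {Ω : Type*} [MeasurableSpace Ω] (P Q : Measure Ω)
    [IsProbabilityMeasure P] [IsProbabilityMeasure Q]
    (f : ℕ → Ω → ℝ) (flim : Ω → ℝ)
    (hfmeas : ∀ n, Measurable (f n)) (hfnn : ∀ n, 0 ≤ᵐ[P] f n)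
    (hflimmeas : Measurable flim) (hflimnn : 0 ≤ᵐ[P] flim)
    (hconv : TendstoInMeasure P f atTop flim)
    (hPQ : P ≪ Q) (hQP : Q ≪ P)
    (hsup : (⨆ n, ∫⁻ ω, ENNReal.ofReal (f n ω) ∂Q) < ⊤)
    (hL1 : Tendsto (fun n => ∫⁻ ω, ENNReal.ofReal |f n ω - flim ω| ∂Q) atTop (nhds 0))
    (g : ℕ → Ω → ℝ) (glim : Ω → ℝ)
    (hmem : ∀ k, MemCountableConvex P f flim (g k))
    (hglimmeas : Measurable glim)
    (hconv2 : TendstoInMeasure P g atTop glim) :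
    MemCountableConvex P f flim glim ∧
      Tendsto (fun k => ∫⁻ ω, ENNReal.ofReal |g k ω - glim ω| ∂Q) atTop (nhds 0) :=
  stmt8_general P Q f flim hfmeas hfnn hflimmeas hPQ hQP hsup hL1 g glim hmem hconv2
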